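/- arXiv:2502.02786 — 4 statements merged into one kernel-verified Lean document; each statement's English description precedes it below -/
import Mathlib

section
/- Given probability density functions p, q on ℝ with p(x) > 0 for almost every x and χ := ∫ q(x)²/p(x) dx < ∞, an integer d ≥ 1, and group sizes m₁,…,m_d ∈ ℕ with N = m₁+…+m_d, define probability measures on ℝ^N (coordinates indexed by pairs (j,k), j ∈ {1,…,d}, k ∈ {1,…,m_j}): Q has density ∏_{j=1}^d ∏_{k=1}^{m_j} p(b_j^{(k)}), and P has density (1/d) ∑_{j=1}^d [∏_{k=1}^{m_j} q(b_j^{(k)})] · ∏_{j'≠j} ∏_{k=1}^{m_{j'}} p(b_{j'}^{(k)}). Then TV(P, Q) ≤ (1/(2√d)) · [ (1/d) ∑_{j=1}^d χ^{m_j} − 1 ]^{1/2}. Consequently, for any hypothesis test Ψ distinguishing Q from P, the sum of the two error probabilities is at least 1 − (1/(2√d)) · [ (1/d) ∑_{j=1}^d χ^{m_j} − 1 ]^{1/2}. -/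
/-!
Both measures have densities on `ℝ^N`, so `TV(P, Q) ≤ ½ ∫ |f - g|`, and Cauchy–Schwarz against
`√g` bounds this by `½ √(∫ f²/g - 1)`. With `g = ∏ p` and `f` the average of the `d` densities
`g_j` in which group `j` is drawn from `q`, the integral `∫ f²/g` expands into the cross terms
`∫ g_j g_k / g`, which factor over coordinates: a coordinate contributes `χ` when it lies in
group `j = k`, and `1` otherwise. Hence `∫ f²/g = d⁻² (∑_j χ^{m_j} + d² - d)`.
-/

open MeasureTheory

/-- Total variation distance between two measures:
`TV(P, Q) = sup over measurable sets s of |P s - Q s|`. -/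
noncomputable def tvDist {Ω : Type*} [MeasurableSpace Ω] (P Q : Measure Ω) : ℝ :=
  ⨆ s : {s : Set Ω // MeasurableSet s}, |(P s.1).toReal - (Q s.1).toReal|

section TotalVariation

variable {Ω : Type*} [MeasurableSpace Ω]

lemma abs_sub_le_tvDist (P Q : Measure Ω) [IsFiniteMeasure P] [IsFiniteMeasure Q]
    {s : Set Ω} (hs : MeasurableSet s) : |(P s).toReal - (Q s).toReal| ≤ tvDist P Q := by
  refine le_ciSup (f := fun s : {s : Set Ω // MeasurableSet s} => |(P s.1).toReal - (Q s.1).toReal|)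
    ⟨P.real Set.univ + Q.real Set.univ, ?_⟩ ⟨s, hs⟩
  rintro _ ⟨t, rfl⟩
  calc |P.real t - Q.real t| ≤ |P.real t| + |Q.real t| := abs_sub _ _
    _ ≤ P.real Set.univ + Q.real Set.univ := by
      rw [abs_of_nonneg measureReal_nonneg, abs_of_nonneg measureReal_nonneg]
      exact add_le_add (measureReal_mono (Set.subset_univ _)) (measureReal_mono (Set.subset_univ _))

lemma tvDist_le_of_forall {P Q : Measure Ω} {B : ℝ}
    (h : ∀ s, MeasurableSet s → |(P s).toReal - (Q s).toReal| ≤ B) : tvDist P Q ≤ B :=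
  haveI : Nonempty {s : Set Ω // MeasurableSet s} := ⟨⟨∅, .empty⟩⟩
  ciSup_le fun s => h s.1 s.2

lemma one_sub_tvDist_le_toReal_add_compl (P Q : Measure Ω) [IsProbabilityMeasure P]
    [IsProbabilityMeasure Q] {s : Set Ω} (hs : MeasurableSet s) :
    1 - tvDist P Q ≤ (P s).toReal + (Q sᶜ).toReal := by
  have hs_le : -tvDist P Q ≤ P.real s - Q.real s := (abs_le.1 (abs_sub_le_tvDist P Q hs)).1
  have hcompl : Q.real sᶜ = 1 - Q.real s := probReal_compl_eq_one_sub hs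
  change 1 - tvDist P Q ≤ P.real s + Q.real sᶜ
  linarith

lemma toReal_withDensity_ofReal {μ : Measure Ω} {f : Ω → ℝ} (hf : Integrable f μ) (hf0 : 0 ≤ f)
    {s : Set Ω} (hs : MeasurableSet s) :
    (μ.withDensity (fun x => ENNReal.ofReal (f x)) s).toReal = ∫ x in s, f x ∂μ := by
  rw [withDensity_apply _ hs, integral_eq_lintegral_of_nonneg_ae (.of_forall hf0)
    hf.aestronglyMeasurable.restrict]

lemma isProbabilityMeasure_withDensity_ofReal {μ : Measure Ω} {f : Ω → ℝ} (hf : Integrable f μ)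
    (hf0 : 0 ≤ f) (hf1 : ∫ x, f x ∂μ = 1) :
    IsProbabilityMeasure (μ.withDensity fun x => ENNReal.ofReal (f x)) := by
  constructor
  rw [withDensity_apply _ .univ, Measure.restrict_univ,
    ← ofReal_integral_eq_lintegral_ofReal hf (.of_forall hf0), hf1, ENNReal.ofReal_one]

lemma abs_setIntegral_sub_le_half_integral_abs_sub {μ : Measure Ω} {f g : Ω → ℝ}
    (hf : Integrable f μ) (hg : Integrable g μ) (hfg : ∫ x, f x ∂μ = ∫ x, g x ∂μ)
    {s : Set Ω} (hs : MeasurableSet s) :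
    |(∫ x in s, f x ∂μ) - ∫ x in s, g x ∂μ| ≤ (1 / 2) * ∫ x, |f x - g x| ∂μ := by
  have hsub : Integrable (fun x => f x - g x) μ := hf.sub hg
  have hcompl : (∫ x in s, (f x - g x) ∂μ) + ∫ x in sᶜ, (f x - g x) ∂μ = 0 := by
    rw [integral_add_compl hs hsub, integral_sub hf hg, hfg, sub_self]
  have hs_le : |∫ x in s, (f x - g x) ∂μ| ≤ ∫ x in s, |f x - g x| ∂μ :=
    abs_integral_le_integral_abs
  have hsc_le : |∫ x in sᶜ, (f x - g x) ∂μ| ≤ ∫ x in sᶜ, |f x - g x| ∂μ :=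
    abs_integral_le_integral_abs
  rw [← integral_sub hf.integrableOn hg.integrableOn, ← integral_add_compl hs hsub.abs]
  rw [eq_neg_of_add_eq_zero_right hcompl, abs_neg] at hsc_le
  linarith

lemma tvDist_withDensity_le_half_integral_abs_sub {μ : Measure Ω} {f g : Ω → ℝ}
    (hf : Integrable f μ) (hg : Integrable g μ) (hf0 : 0 ≤ f) (hg0 : 0 ≤ g)
    (hfg : ∫ x, f x ∂μ = ∫ x, g x ∂μ) :
    tvDist (μ.withDensity fun x => ENNReal.ofReal (f x))
        (μ.withDensity fun x => ENNReal.ofReal (g x)) ≤ (1 / 2) * ∫ x, |f x - g x| ∂μ :=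
  tvDist_le_of_forall fun s hs => by
    rw [toReal_withDensity_ofReal hf hf0 hs, toReal_withDensity_ofReal hg hg0 hs]
    exact abs_setIntegral_sub_le_half_integral_abs_sub hf hg hfg hs

end TotalVariation

section ChiSquare

variable {Ω : Type*} [MeasurableSpace Ω] {μ : Measure Ω} {f g : Ω → ℝ}

lemma integral_abs_sub_le_sqrt_mul_sqrt (hf : AEStronglyMeasurable f μ) (hg : Integrable g μ)
    (hgpos : ∀ᵐ x ∂μ, 0 < g x) (hfg : Integrable (fun x => (f x - g x) ^ 2 / g x) μ) :
    ∫ x, |f x - g x| ∂μ ≤ √(∫ x, (f x - g x) ^ 2 / g x ∂μ) * √(∫ x, g x ∂μ) := by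
  -- Cauchy–Schwarz for `|f - g| = (|f - g| / √g) * √g`
  set F := fun x => |f x - g x| / √(g x)
  set G := fun x => √(g x)
  have hFG : (fun x => F x * G x) =ᵐ[μ] fun x => |f x - g x| := by
    filter_upwards [hgpos] with x hx
    exact div_mul_cancel₀ _ (Real.sqrt_pos.2 hx).ne'
  have hF2 : (fun x => F x ^ 2) =ᵐ[μ] fun x => (f x - g x) ^ 2 / g x := by
    filter_upwards [hgpos] with x hx
    simp only [F, div_pow, sq_abs, Real.sq_sqrt hx.le]
  have hG2 : (fun x => G x ^ 2) =ᵐ[μ] g := by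
    filter_upwards [hgpos] with x hx using Real.sq_sqrt hx.le
  have hGmeas : AEStronglyMeasurable G μ :=
    Real.continuous_sqrt.comp_aestronglyMeasurable hg.aestronglyMeasurable
  have hFmeas : AEStronglyMeasurable F μ := (hf.sub hg.aestronglyMeasurable).norm.div₀ hGmeas
  have hFmem : MemLp F 2 μ := (memLp_two_iff_integrable_sq hFmeas).2 (hfg.congr hF2.symm)
  have hGmem : MemLp G 2 μ := (memLp_two_iff_integrable_sq hGmeas).2 (hg.congr hG2.symm)
  have hCS := integral_mul_le_Lp_mul_Lq_of_nonneg Real.HolderConjugate.two_two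
    (.of_forall fun x => div_nonneg (abs_nonneg _) (Real.sqrt_nonneg _))
    (.of_forall fun x => Real.sqrt_nonneg _) (by simpa using hFmem) (by simpa using hGmem)
  simp only [Real.rpow_two, ← Real.sqrt_eq_rpow] at hCS
  rwa [integral_congr_ae hFG, integral_congr_ae hF2, integral_congr_ae hG2] at hCS

lemma sq_sub_div_ae_eq (hgpos : ∀ᵐ x ∂μ, 0 < g x) :
    (fun x => (f x - g x) ^ 2 / g x) =ᵐ[μ] fun x => f x ^ 2 / g x - 2 * f x + g x := by
  filter_upwards [hgpos] with x hx
  field_simp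
  ring

lemma integrable_sq_sub_div (hf : Integrable f μ) (hg : Integrable g μ)
    (hgpos : ∀ᵐ x ∂μ, 0 < g x) (hfg : Integrable (fun x => f x ^ 2 / g x) μ) :
    Integrable (fun x => (f x - g x) ^ 2 / g x) μ :=
  ((hfg.sub (hf.const_mul 2)).add hg).congr (sq_sub_div_ae_eq hgpos).symm

lemma integral_sq_sub_div (hf : Integrable f μ) (hg : Integrable g μ)
    (hgpos : ∀ᵐ x ∂μ, 0 < g x) (hfg : Integrable (fun x => f x ^ 2 / g x) μ) :
    ∫ x, (f x - g x) ^ 2 / g x ∂μ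
      = ∫ x, f x ^ 2 / g x ∂μ - 2 * ∫ x, f x ∂μ + ∫ x, g x ∂μ := by
  have hsub : Integrable (fun x => f x ^ 2 / g x - 2 * f x) μ := hfg.sub (hf.const_mul 2)
  rw [integral_congr_ae (sq_sub_div_ae_eq hgpos), integral_add hsub hg,
    integral_sub hfg (hf.const_mul 2), integral_const_mul]

lemma integral_abs_sub_le_sqrt_integral_sq_div_sub_one (hf : Integrable f μ)
    (hg : Integrable g μ) (hgpos : ∀ᵐ x ∂μ, 0 < g x)
    (hfg : Integrable (fun x => f x ^ 2 / g x) μ) (hf1 : ∫ x, f x ∂μ = 1)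
    (hg1 : ∫ x, g x ∂μ = 1) :
    ∫ x, |f x - g x| ∂μ ≤ √(∫ x, f x ^ 2 / g x ∂μ - 1) := by
  have h := integral_abs_sub_le_sqrt_mul_sqrt hf.aestronglyMeasurable hg hgpos
    (integrable_sq_sub_div hf hg hgpos hfg)
  rwa [integral_sq_sub_div hf hg hgpos hfg, hf1, hg1, Real.sqrt_one, mul_one,
    show ∀ a : ℝ, a - 2 * 1 + 1 = a - 1 from fun a => by ring] at h

lemma tvDist_withDensity_le_half_sqrt (hf : Integrable f μ) (hg : Integrable g μ) (hf0 : 0 ≤ f)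
    (hg0 : 0 ≤ g) (hgpos : ∀ᵐ x ∂μ, 0 < g x) (hfg : Integrable (fun x => f x ^ 2 / g x) μ)
    (hf1 : ∫ x, f x ∂μ = 1) (hg1 : ∫ x, g x ∂μ = 1) :
    tvDist (μ.withDensity fun x => ENNReal.ofReal (f x))
        (μ.withDensity fun x => ENNReal.ofReal (g x)) ≤
      (1 / 2) * √(∫ x, f x ^ 2 / g x ∂μ - 1) :=
  (tvDist_withDensity_le_half_integral_abs_sub hf hg hf0 hg0 (hf1.trans hg1.symm)).trans <|
    mul_le_mul_of_nonneg_left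
      (integral_abs_sub_le_sqrt_integral_sq_div_sub_one hf hg hgpos hfg hf1 hg1) (by norm_num)

end ChiSquare

section ProductDensity

variable {ι : Type*} [Fintype ι] {E : ι → Type*}

lemma prod_mul_prod_div_prod (u v w : (i : ι) → E i → ℝ) (b : (i : ι) → E i) :
    (∏ i, u i (b i)) * (∏ i, v i (b i)) / ∏ i, w i (b i)
      = ∏ i, u i (b i) * v i (b i) / w i (b i) := by
  rw [← Finset.prod_mul_distrib, ← Finset.prod_div_distrib]

variable [∀ i, MeasureSpace (E i)] [∀ i, SigmaFinite (volume : Measure (E i))]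

lemma integrable_prod_mul_prod_div_prod {u v w : (i : ι) → E i → ℝ}
    (h : ∀ i, Integrable fun x => u i x * v i x / w i x) :
    Integrable fun b : (i : ι) → E i => (∏ i, u i (b i)) * (∏ i, v i (b i)) / ∏ i, w i (b i) := by
  simp only [prod_mul_prod_div_prod]
  exact Integrable.fintype_prod_dep h

lemma integral_prod_mul_prod_div_prod (u v w : (i : ι) → E i → ℝ) :
    ∫ b : (i : ι) → E i, (∏ i, u i (b i)) * (∏ i, v i (b i)) / ∏ i, w i (b i)
      = ∏ i, ∫ x, u i x * v i x / w i x := by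
  simp only [prod_mul_prod_div_prod]
  exact integral_fintype_prod_eq_prod (fun i x => u i x * v i x / w i x)

lemma integral_fintype_prod_eq_one {w : (i : ι) → E i → ℝ} (h : ∀ i, ∫ x, w i x = 1) :
    ∫ b : (i : ι) → E i, ∏ i, w i (b i) = 1 := by
  rw [volume_pi, integral_fintype_prod_eq_prod]
  exact Finset.prod_eq_one fun i _ => h i

lemma ae_prod_pos {w : (i : ι) → E i → ℝ} (h : ∀ i, ∀ᵐ x, 0 < w i x) :
    ∀ᵐ b : (i : ι) → E i, 0 < ∏ i, w i (b i) := by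
  have : ∀ᵐ b : (i : ι) → E i, ∀ i, 0 < w i (b i) :=
    ae_all_iff.2 fun i => (Measure.tendsto_eval_ae_ae (μ := fun i => volume)).eventually (h i)
  filter_upwards [this] with b hb using Finset.prod_pos fun i _ => hb i

end ProductDensity

lemma mul_div_ae_eq_of_ae_pos {Ω : Type*} [MeasurableSpace Ω] {μ : Measure Ω} {p : Ω → ℝ}
    (hp : ∀ᵐ x ∂μ, 0 < p x) (u : Ω → ℝ) : (fun x => u x * p x / p x) =ᵐ[μ] u := by
  filter_upwards [hp] with x hx using mul_div_cancel_right₀ _ hx.ne'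

lemma mul_sum_sq_div {κ K : Type*} [Field K] (s : Finset κ) (c : K) (F : κ → K) (g : K) :
    (c * ∑ j ∈ s, F j) ^ 2 / g = c ^ 2 * ∑ j ∈ s, ∑ k ∈ s, F j * F k / g := by
  simp only [mul_pow, sq (∑ j ∈ s, F j), Finset.sum_mul_sum, mul_div_assoc, Finset.sum_div]

lemma sum_sum_ite_eq {κ : Type*} [Fintype κ] [DecidableEq κ] (a : κ → ℝ) :
    ∑ j, ∑ k, (if j = k then a j else 1)
      = ∑ j, a j + ((Fintype.card κ : ℝ) ^ 2 - Fintype.card κ) := by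
  have h : ∀ j k : κ, (if j = k then a j else 1) = (if j = k then a j - 1 else 0) + 1 := by
    intro j k; split_ifs <;> ring
  simp only [h, Finset.sum_add_distrib, Finset.sum_ite_eq, Finset.mem_univ, if_true,
    Finset.sum_sub_distrib, Finset.sum_const, Finset.card_univ, nsmul_eq_mul, mul_one]
  ring

section GroupMixture

variable {ι : Type*} [DecidableEq ι] {κ : ι → Type*} {p q : ℝ → ℝ}

/-- Density of coordinate `i` when group `j` is the one drawn from `q`. -/
def groupFactor (p q : ℝ → ℝ) (j : ι) (i : (j : ι) × κ j) : ℝ → ℝ :=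
  if i.1 = j then q else p

lemma integrable_groupFactor (hp : Integrable p) (hq : Integrable q) (j : ι)
    (i : (j : ι) × κ j) : Integrable (groupFactor p q j i) := by
  unfold groupFactor; split_ifs <;> assumption

lemma integral_groupFactor (hp1 : ∫ x, p x = 1) (hq1 : ∫ x, q x = 1) (j : ι)
    (i : (j : ι) × κ j) : ∫ x, groupFactor p q j i x = 1 := by
  unfold groupFactor; split_ifs <;> assumption

lemma groupFactor_nonneg (hp0 : 0 ≤ p) (hq0 : 0 ≤ q) (j : ι) (i : (j : ι) × κ j) :
    0 ≤ groupFactor p q j i := by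
  unfold groupFactor; split_ifs <;> assumption

lemma groupFactor_mul_div_ae_eq (hppos : ∀ᵐ x, 0 < p x) (j j' : ι) (i : (j : ι) × κ j) :
    (fun x => groupFactor p q j i x * groupFactor p q j' i x / p x) =ᵐ[volume]
      if i.1 = j ∧ i.1 = j' then fun x => q x ^ 2 / p x
      else if i.1 = j ∨ i.1 = j' then q else p := by
  unfold groupFactor
  by_cases h : i.1 = j <;> by_cases h' : i.1 = j'
  · rw [if_pos h, if_pos h', if_pos ⟨h, h'⟩]
    exact .of_forall fun x => by simp only [sq]
  · rw [if_pos h, if_neg h', if_neg fun hh => h' hh.2, if_pos (Or.inl h)]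
    exact mul_div_ae_eq_of_ae_pos hppos q
  · rw [if_neg h, if_pos h', if_neg fun hh => h hh.1, if_pos (Or.inr h')]
    simpa only [mul_comm] using mul_div_ae_eq_of_ae_pos hppos q
  · rw [if_neg h, if_neg h', if_neg fun hh => h hh.1, if_neg (by tauto)]
    exact mul_div_ae_eq_of_ae_pos hppos p

lemma integrable_groupFactor_mul_div (hp : Integrable p) (hq : Integrable q)
    (hppos : ∀ᵐ x, 0 < p x) (hqp : Integrable fun x => q x ^ 2 / p x) (j j' : ι)
    (i : (j : ι) × κ j) :
    Integrable fun x => groupFactor p q j i x * groupFactor p q j' i x / p x := by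
  refine Integrable.congr ?_ (groupFactor_mul_div_ae_eq hppos j j' i).symm
  split_ifs <;> assumption

lemma integral_groupFactor_mul_div (hp1 : ∫ x, p x = 1) (hq1 : ∫ x, q x = 1)
    (hppos : ∀ᵐ x, 0 < p x) (j j' : ι) (i : (j : ι) × κ j) :
    ∫ x, groupFactor p q j i x * groupFactor p q j' i x / p x
      = if i.1 = j ∧ i.1 = j' then ∫ x, q x ^ 2 / p x else 1 := by
  rw [integral_congr_ae (groupFactor_mul_div_ae_eq hppos j j' i)]
  split_ifs <;> first | rfl | assumption

variable [Fintype ι] [∀ j, Fintype (κ j)]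

def shiftedGroupDensity (p q : ℝ → ℝ) (j : ι) (b : ((j : ι) × κ j) → ℝ) : ℝ :=
  ∏ i, groupFactor p q j i (b i)

noncomputable def mixtureDensity (p q : ℝ → ℝ) (b : ((j : ι) × κ j) → ℝ) : ℝ :=
  (1 / Fintype.card ι : ℝ) * ∑ j, shiftedGroupDensity p q j b

lemma shiftedGroupDensity_eq (p q : ℝ → ℝ) (j : ι) (b : ((j : ι) × κ j) → ℝ) :
    shiftedGroupDensity p q j b
      = (∏ k, q (b ⟨j, k⟩)) * ∏ j' ∈ Finset.univ.erase j, ∏ k, p (b ⟨j', k⟩) := by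
  rw [shiftedGroupDensity, Fintype.prod_sigma, ← Finset.mul_prod_erase _ _ (Finset.mem_univ j)]
  congr 1
  · simp [groupFactor]
  · refine Finset.prod_congr rfl fun j' hj' => ?_
    simp [groupFactor, (Finset.mem_erase.1 hj').1]

lemma prod_sigma_ite_and (c : ℝ) (j j' : ι) :
    ∏ i : (j : ι) × κ j, (if i.1 = j ∧ i.1 = j' then c else 1)
      = if j = j' then c ^ Fintype.card (κ j) else 1 := by
  split_ifs with hjj
  · subst hjj
    simp only [Fintype.prod_sigma, and_self]
    rw [Fintype.prod_eq_single j fun x hx => by simp [hx]]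
    simp
  · exact Finset.prod_eq_one fun i _ => if_neg fun hh => hjj (hh.1.symm.trans hh.2)

lemma shiftedGroupDensity_nonneg (hp0 : 0 ≤ p) (hq0 : 0 ≤ q) (j : ι) :
    0 ≤ shiftedGroupDensity (κ := κ) p q j := fun b =>
  Finset.prod_nonneg fun i _ => groupFactor_nonneg hp0 hq0 j i (b i)

lemma integrable_shiftedGroupDensity (hp : Integrable p) (hq : Integrable q) (j : ι) :
    Integrable (shiftedGroupDensity (κ := κ) p q j) :=
  Integrable.fintype_prod_dep (integrable_groupFactor hp hq j)

lemma integral_shiftedGroupDensity (hp1 : ∫ x, p x = 1) (hq1 : ∫ x, q x = 1) (j : ι) :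
    ∫ b, shiftedGroupDensity (κ := κ) p q j b = 1 :=
  integral_fintype_prod_eq_one (integral_groupFactor hp1 hq1 j)

lemma integrable_shiftedGroupDensity_mul_div (hp : Integrable p) (hq : Integrable q)
    (hppos : ∀ᵐ x, 0 < p x) (hqp : Integrable fun x => q x ^ 2 / p x) (j j' : ι) :
    Integrable fun b : ((j : ι) × κ j) → ℝ =>
      shiftedGroupDensity p q j b * shiftedGroupDensity p q j' b / ∏ i, p (b i) :=
  integrable_prod_mul_prod_div_prod (w := fun _ => p)
    (integrable_groupFactor_mul_div hp hq hppos hqp j j')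

lemma integral_shiftedGroupDensity_mul_div (hp1 : ∫ x, p x = 1) (hq1 : ∫ x, q x = 1)
    (hppos : ∀ᵐ x, 0 < p x) (j j' : ι) :
    ∫ b : ((j : ι) × κ j) → ℝ,
        shiftedGroupDensity p q j b * shiftedGroupDensity p q j' b / ∏ i, p (b i)
      = if j = j' then (∫ x, q x ^ 2 / p x) ^ Fintype.card (κ j) else 1 := by
  rw [← prod_sigma_ite_and]
  simp only [shiftedGroupDensity]
  rw [integral_prod_mul_prod_div_prod (w := fun _ => p)]
  exact Finset.prod_congr rfl fun i _ => integral_groupFactor_mul_div hp1 hq1 hppos j j' i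

lemma mixtureDensity_nonneg (hp0 : 0 ≤ p) (hq0 : 0 ≤ q) : 0 ≤ mixtureDensity (κ := κ) p q :=
  fun b => mul_nonneg (by positivity)
    (Finset.sum_nonneg fun j _ => shiftedGroupDensity_nonneg hp0 hq0 j b)

lemma integrable_mixtureDensity (hp : Integrable p) (hq : Integrable q) :
    Integrable (mixtureDensity (κ := κ) p q) :=
  (integrable_finsetSum _ fun j _ => integrable_shiftedGroupDensity hp hq j).const_mul _

lemma integral_mixtureDensity [Nonempty ι] (hp : Integrable p) (hq : Integrable q)
    (hp1 : ∫ x, p x = 1) (hq1 : ∫ x, q x = 1) :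
    ∫ b, mixtureDensity (κ := κ) p q b = 1 := by
  simp only [mixtureDensity]
  rw [integral_const_mul, integral_finsetSum _ fun j _ => integrable_shiftedGroupDensity hp hq j]
  simp only [integral_shiftedGroupDensity hp1 hq1, Finset.sum_const, Finset.card_univ,
    nsmul_eq_mul, mul_one]
  field_simp

lemma integrable_mixtureDensity_sq_div (hp : Integrable p) (hq : Integrable q)
    (hppos : ∀ᵐ x, 0 < p x) (hqp : Integrable fun x => q x ^ 2 / p x) :
    Integrable fun b : ((j : ι) × κ j) → ℝ => mixtureDensity p q b ^ 2 / ∏ i, p (b i) := by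
  simp only [mixtureDensity, mul_sum_sq_div]
  exact (integrable_finsetSum _ fun j _ => integrable_finsetSum _ fun j' _ =>
    integrable_shiftedGroupDensity_mul_div hp hq hppos hqp j j').const_mul _

lemma integral_mixtureDensity_sq_div_sub_one [Nonempty ι] (hp : Integrable p)
    (hq : Integrable q) (hp1 : ∫ x, p x = 1) (hq1 : ∫ x, q x = 1) (hppos : ∀ᵐ x, 0 < p x)
    (hqp : Integrable fun x => q x ^ 2 / p x) :
    (∫ b : ((j : ι) × κ j) → ℝ, mixtureDensity p q b ^ 2 / ∏ i, p (b i)) - 1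
      = ((1 / Fintype.card ι : ℝ) * ∑ j, (∫ x, q x ^ 2 / p x) ^ Fintype.card (κ j) - 1)
          / Fintype.card ι := by
  simp only [mixtureDensity, mul_sum_sq_div]
  rw [integral_const_mul, integral_finsetSum _ fun j _ => integrable_finsetSum _ fun j' _ =>
    integrable_shiftedGroupDensity_mul_div hp hq hppos hqp j j']
  simp only [integral_finsetSum _ fun j' _ =>
    integrable_shiftedGroupDensity_mul_div hp hq hppos hqp _ j',
    integral_shiftedGroupDensity_mul_div hp1 hq1 hppos, sum_sum_ite_eq]
  have : (Fintype.card ι : ℝ) ≠ 0 := Nat.cast_ne_zero.2 Fintype.card_ne_zero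
  field_simp
  ring

lemma tvDist_withDensity_mixtureDensity_le [Nonempty ι] (hp : Integrable p) (hq : Integrable q)
    (hp0 : 0 ≤ p) (hq0 : 0 ≤ q) (hp1 : ∫ x, p x = 1) (hq1 : ∫ x, q x = 1)
    (hppos : ∀ᵐ x, 0 < p x) (hqp : Integrable fun x => q x ^ 2 / p x) :
    tvDist (volume.withDensity fun b => ENNReal.ofReal (mixtureDensity (κ := κ) p q b))
        (volume.withDensity fun b => ENNReal.ofReal (∏ i, p (b i))) ≤
      1 / (2 * √(Fintype.card ι)) *
        √((1 / Fintype.card ι : ℝ) * ∑ j, (∫ x, q x ^ 2 / p x) ^ Fintype.card (κ j) - 1) := by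
  refine (tvDist_withDensity_le_half_sqrt (integrable_mixtureDensity hp hq)
    (Integrable.fintype_prod_dep fun _ => hp) (mixtureDensity_nonneg hp0 hq0)
    (fun b => Finset.prod_nonneg fun i _ => hp0 (b i)) (ae_prod_pos fun _ => hppos)
    (integrable_mixtureDensity_sq_div hp hq hppos hqp) (integral_mixtureDensity hp hq hp1 hq1)
    (integral_fintype_prod_eq_one fun _ => hp1)).trans_eq ?_
  rw [integral_mixtureDensity_sq_div_sub_one hp hq hp1 hq1 hppos hqp,
    Real.sqrt_div' _ (Nat.cast_nonneg _)]
  ring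

end GroupMixture

theorem tv_bound_mixture_general_general
    (p q : ℝ → ℝ)
    (hp0 : 0 ≤ p) (hq0 : 0 ≤ q)
    (hp1 : ∫ x, p x = 1) (hq1 : ∫ x, q x = 1)
    (hppos : ∀ᵐ x ∂(volume : Measure ℝ), 0 < p x)
    (χ : ℝ) (hχint : Integrable (fun x => (q x) ^ 2 / p x))
    (hχ : χ = ∫ x, (q x) ^ 2 / p x)
    (d : ℕ) (hd : 1 ≤ d) (m : Fin d → ℕ)
    (P Q : Measure (((j : Fin d) × Fin (m j)) → ℝ))
    (hQ : Q = volume.withDensity fun b => ENNReal.ofReal (∏ i, p (b i)))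
    (hP : P = volume.withDensity fun b => ENNReal.ofReal
      ((1 / d : ℝ) * ∑ j : Fin d,
        (∏ k : Fin (m j), q (b ⟨j, k⟩)) *
          ∏ j' ∈ Finset.univ.erase j, ∏ k : Fin (m j'), p (b ⟨j', k⟩))) :
    tvDist P Q ≤
        (1 / (2 * Real.sqrt d)) * Real.sqrt ((1 / d : ℝ) * ∑ j, χ ^ (m j) - 1) ∧
      ∀ Ψ : (((j : Fin d) × Fin (m j)) → ℝ) → Bool, Measurable Ψ →
        (P {b | Ψ b = true}).toReal + (Q {b | Ψ b = false}).toReal ≥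
          1 - (1 / (2 * Real.sqrt d)) * Real.sqrt ((1 / d : ℝ) * ∑ j, χ ^ (m j) - 1) := by
  have hp : Integrable p := .of_integral_ne_zero (by simp [hp1])
  have hq : Integrable q := .of_integral_ne_zero (by simp [hq1])
  have : Nonempty (Fin d) := ⟨⟨0, hd⟩⟩
  have hP' : P = volume.withDensity fun b => ENNReal.ofReal (mixtureDensity p q b) := by
    simp only [hP, mixtureDensity, shiftedGroupDensity_eq, Fintype.card_fin]
  have hTV : tvDist P Q ≤
      (1 / (2 * Real.sqrt d)) * Real.sqrt ((1 / d : ℝ) * ∑ j, χ ^ (m j) - 1) := by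
    rw [hP', hQ, hχ]
    simpa only [Fintype.card_fin] using
      tvDist_withDensity_mixtureDensity_le (κ := fun j => Fin (m j)) hp hq hp0 hq0 hp1 hq1
        hppos hχint
  refine ⟨hTV, fun Ψ hΨ => ?_⟩
  have : IsProbabilityMeasure P := hP' ▸ isProbabilityMeasure_withDensity_ofReal
    (integrable_mixtureDensity hp hq) (mixtureDensity_nonneg hp0 hq0)
    (integral_mixtureDensity hp hq hp1 hq1)
  have : IsProbabilityMeasure Q := hQ ▸ isProbabilityMeasure_withDensity_ofReal
    (Integrable.fintype_prod_dep fun _ => hp) (fun b => Finset.prod_nonneg fun i _ => hp0 (b i))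
    (integral_fintype_prod_eq_one fun _ => hp1)
  have hs : MeasurableSet {b | Ψ b = true} := hΨ (measurableSet_singleton true)
  have hcompl : {b | Ψ b = false} = {b | Ψ b = true}ᶜ := by ext; simp
  rw [hcompl]
  linarith [one_sub_tvDist_le_toReal_add_compl P Q hs]

/-- Let `p, q` be densities on `ℝ` with `p > 0` a.e. and `χ = ∫ q²/p < ∞`. On `ℝ^N`
(coordinates indexed by `(j,k)`, `j < d`, `k < m j`), let `Q` be the product measure with
all coordinates having density `p`, and `P` the uniform mixture over `j` of products where
group `j` has density `q` and the others density `p`. Then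
`TV(P, Q) ≤ (1/(2√d)) · ((1/d) ∑_j χ^{m_j} - 1)^{1/2}`, and consequently any hypothesis
test `Ψ` distinguishing the two has total error probability at least
`1 - (1/(2√d)) · ((1/d) ∑_j χ^{m_j} - 1)^{1/2}`. -/
theorem tv_bound_mixture_general
    (p q : ℝ → ℝ) (hpm : Measurable p) (hqm : Measurable q)
    (hp0 : 0 ≤ p) (hq0 : 0 ≤ q)
    (hp1 : ∫ x, p x = 1) (hq1 : ∫ x, q x = 1)
    (hppos : ∀ᵐ x ∂(volume : Measure ℝ), 0 < p x)
    (χ : ℝ) (hχint : Integrable (fun x => (q x) ^ 2 / p x))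
    (hχ : χ = ∫ x, (q x) ^ 2 / p x)
    (d : ℕ) (hd : 1 ≤ d) (m : Fin d → ℕ)
    (P Q : Measure (((j : Fin d) × Fin (m j)) → ℝ))
    (hQ : Q = volume.withDensity fun b => ENNReal.ofReal (∏ i, p (b i)))
    (hP : P = volume.withDensity fun b => ENNReal.ofReal
      ((1 / d : ℝ) * ∑ j : Fin d,
        (∏ k : Fin (m j), q (b ⟨j, k⟩)) *
          ∏ j' ∈ Finset.univ.erase j, ∏ k : Fin (m j'), p (b ⟨j', k⟩))) :
    tvDist P Q ≤
        (1 / (2 * Real.sqrt d)) * Real.sqrt ((1 / d : ℝ) * ∑ j, χ ^ (m j) - 1) ∧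
      ∀ Ψ : (((j : Fin d) × Fin (m j)) → ℝ) → Bool, Measurable Ψ →
        (P {b | Ψ b = true}).toReal + (Q {b | Ψ b = false}).toReal ≥
          1 - (1 / (2 * Real.sqrt d)) * Real.sqrt ((1 / d : ℝ) * ∑ j, χ ^ (m j) - 1) :=
  tv_bound_mixture_general_general p q hp0 hq0 hp1 hq1 hppos χ hχint hχ d hd m P Q hQ hP
end

section
/- Let ε ∈ ℝ with |ε| < 1/2. Let p be the probability mass function on {−1, 1} with p(−1) = p(1) = 1/2, and q the probability mass function with q(−1) = 1/2 + ε and q(1) = 1/2 − ε. Given an integer d ≥ 1 and group sizes m₁,…,m_d ∈ ℕ with N = m₁+…+m_d, define probability measures on {−1,1}^N (coordinates indexed by pairs (j,k), j ∈ {1,…,d}, k ∈ {1,…,m_j}): Q has mass function ∏_{j=1}^d ∏_{k=1}^{m_j} p(b_j^{(k)}), and P has mass function (1/d) ∑_{j=1}^d [∏_{k=1}^{m_j} q(b_j^{(k)})] · ∏_{j'≠j} ∏_{k=1}^{m_{j'}} p(b_{j'}^{(k)}). Then TV(P, Q) ≤ (1/(2√d)) · [ (1/d) ∑_{j=1}^d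 (1 + 4ε²)^{m_j} − 1 ]^{1/2}, and hence for any hypothesis test distinguishing Q from P the sum of the two error probabilities is at least 1 − (1/(2√d)) · [ (1/d) ∑_{j=1}^d (1 + 4ε²)^{m_j} − 1 ]^{1/2}. -/
open MeasureTheory

open scoped Classical

lemma sum_prod_bool {I : Type*} [Fintype I] [DecidableEq I] {M : Type*} [CommSemiring M]
    (g : I → Bool → M) :
    ∑ σ : I → Bool, ∏ i, g i (σ i) = ∏ i, (g i false + g i true) := by
  have h := Finset.prod_univ_sum (fun _ : I => (Finset.univ : Finset Bool)) g
  rw [Fintype.piFinset_univ] at h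
  simp only [Fintype.sum_bool] at h
  rw [← h]
  exact Finset.prod_congr rfl fun i _ => by rw [add_comm]

lemma sum_dirac_apply {Ω : Type*} [MeasurableSpace Ω] {κ : Type*} [Fintype κ]
    (w : κ → ℝ) (hw : ∀ k, 0 ≤ w k) (e : κ → Ω) {s : Set Ω} (hs : MeasurableSet s) :
    ((∑ k, ENNReal.ofReal (w k) • Measure.dirac (e k)) s) =
      ENNReal.ofReal (∑ k, if e k ∈ s then w k else 0) := by
  classical
  rw [Measure.finset_sum_apply, ENNReal.ofReal_sum_of_nonneg
    (fun k _ => by split <;> simp [hw k])]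
  refine Finset.sum_congr rfl fun k _ => ?_
  rw [Measure.smul_apply, Measure.dirac_apply' _ hs, Set.indicator_apply]
  split <;> simp

lemma pi_two_point {I : Type*} [Fintype I] [DecidableEq I] (c : I → Bool → ℝ)
    (hc : ∀ i v, 0 ≤ c i v) :
    Measure.pi (fun i : I => ENNReal.ofReal (c i false) • Measure.dirac (-1 : ℝ) +
        ENNReal.ofReal (c i true) • Measure.dirac (1 : ℝ)) =
      ∑ σ : I → Bool, ENNReal.ofReal (∏ i, c i (σ i)) •
        Measure.dirac (fun i => if σ i then (1 : ℝ) else -1) := by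
  classical
  haveI : ∀ i : I, SigmaFinite (ENNReal.ofReal (c i false) • Measure.dirac (-1 : ℝ) +
      ENNReal.ofReal (c i true) • Measure.dirac (1 : ℝ)) := by
    intro i
    haveI : IsFiniteMeasure (ENNReal.ofReal (c i false) • Measure.dirac (-1 : ℝ) +
        ENNReal.ofReal (c i true) • Measure.dirac (1 : ℝ)) := by
      constructor
      simp [Measure.smul_apply, lt_top_iff_ne_top]
    infer_instance
  refine Measure.pi_eq fun s hs => ?_
  rw [Measure.finset_sum_apply]
  have key : ∀ σ : I → Bool,
      (ENNReal.ofReal (∏ i, c i (σ i)) • Measure.dirac (fun i => if σ i then (1 : ℝ) else -1))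
        (Set.univ.pi s) =
      ∏ i, (ENNReal.ofReal (c i (σ i)) *
        ((Measure.dirac (if σ i then (1:ℝ) else -1)) (s i))) := by
    intro σ
    rw [Measure.smul_apply, Measure.dirac_apply' _ (MeasurableSet.univ_pi hs),
      Set.indicator_apply, ENNReal.ofReal_prod_of_nonneg (fun i _ => hc i (σ i))]
    by_cases hmem : (fun i => if σ i then (1:ℝ) else -1) ∈ Set.univ.pi s
    · rw [if_pos hmem]
      simp only [smul_eq_mul, Pi.one_apply, mul_one]
      refine Finset.prod_congr rfl fun i _ => ?_
      rw [Measure.dirac_apply' _ (hs i), Set.indicator_apply,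
        if_pos (hmem i (Set.mem_univ i)), Pi.one_apply, mul_one]
    · rw [if_neg hmem, smul_eq_mul, mul_zero]
      rw [Set.mem_univ_pi] at hmem
      push_neg at hmem
      obtain ⟨i, hi⟩ := hmem
      rw [eq_comm, Finset.prod_eq_zero (Finset.mem_univ i)]
      rw [Measure.dirac_apply' _ (hs i), Set.indicator_apply, if_neg hi, mul_zero]
  simp only [key]
  rw [sum_prod_bool (fun i v => ENNReal.ofReal (c i v) *
    ((Measure.dirac (if v then (1:ℝ) else -1)) (s i)))]
  refine Finset.prod_congr rfl fun i _ => ?_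
  rw [Measure.add_apply, Measure.smul_apply, Measure.smul_apply]
  norm_num


lemma abs_sum_ite_le {κ : Type*} [Fintype κ] (Δ : κ → ℝ) (h0 : ∑ k, Δ k = 0)
    (φ : κ → Prop) [DecidablePred φ] :
    |∑ k, if φ k then Δ k else 0| ≤ (∑ k, |Δ k|) / 2 := by
  rw [abs_le]
  constructor
  · have h1 : ∑ k, (-(|Δ k| - Δ k) / 2) ≤ ∑ k, (if φ k then Δ k else 0) := by
      refine Finset.sum_le_sum fun k _ => ?_
      have := le_abs_self (Δ k); have := neg_abs_le (Δ k)
      split <;> linarith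
    have h2 : ∑ k, (-(|Δ k| - Δ k) / 2) = -((∑ k, |Δ k|) / 2) := by
      have e : ∀ k : κ, -(|Δ k| - Δ k) / 2 = Δ k / 2 - |Δ k| / 2 := fun k => by ring
      simp only [e, Finset.sum_sub_distrib, ← Finset.sum_div, h0]
      ring
    linarith
  · have h1 : ∑ k, (if φ k then Δ k else 0) ≤ ∑ k, ((|Δ k| + Δ k) / 2) := by
      refine Finset.sum_le_sum fun k _ => ?_
      have := le_abs_self (Δ k); have := neg_abs_le (Δ k)
      split <;> linarith
    have h2 : ∑ k, ((|Δ k| + Δ k) / 2) = (∑ k, |Δ k|) / 2 := by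
      have e : ∀ k : κ, (|Δ k| + Δ k) / 2 = |Δ k| / 2 + Δ k / 2 := fun k => by ring
      simp only [e, Finset.sum_add_distrib, ← Finset.sum_div, h0]
      ring
    linarith

lemma l1_sq_le_chi {κ : Type*} [Fintype κ] (wq Δ : κ → ℝ) (hq : ∀ k, 0 < wq k)
    (hqs : ∑ k, wq k = 1) :
    (∑ k, |Δ k|) ^ 2 ≤ ∑ k, (Δ k) ^ 2 / wq k := by
  have h := Finset.sum_mul_sq_le_sq_mul_sq Finset.univ
    (fun k => |Δ k| / Real.sqrt (wq k)) (fun k => Real.sqrt (wq k))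
  have h1 : ∀ k : κ, |Δ k| / Real.sqrt (wq k) * Real.sqrt (wq k) = |Δ k| := fun k =>
    div_mul_cancel₀ _ (ne_of_gt (Real.sqrt_pos.mpr (hq k)))
  have h2 : ∀ k : κ, (|Δ k| / Real.sqrt (wq k)) ^ 2 = (Δ k) ^ 2 / wq k := fun k => by
    rw [div_pow, sq_abs, Real.sq_sqrt (hq k).le]
  have h3 : ∀ k : κ, (Real.sqrt (wq k)) ^ 2 = wq k := fun k => Real.sq_sqrt (hq k).le
  simp only [h1, h2, h3, hqs, mul_one] at h
  exact h

noncomputable def catc (ε : ℝ) {d : ℕ} {m : Fin d → ℕ} (j : Fin d)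
    (i : (j : Fin d) × Fin (m j)) (v : Bool) : ℝ :=
  if i.1 = j then (if v then 1/2 - ε else 1/2 + ε) else 1/2

lemma catc_nonneg {ε : ℝ} (hε : |ε| < 1/2) {d : ℕ} {m : Fin d → ℕ} (j : Fin d)
    (i : (j : Fin d) × Fin (m j)) (v : Bool) : 0 ≤ catc ε j i v := by
  obtain ⟨h1, h2⟩ := abs_lt.mp hε
  unfold catc; split_ifs <;> linarith

lemma catc_false (ε : ℝ) {d : ℕ} {m : Fin d → ℕ} (j : Fin d)
    (i : (j : Fin d) × Fin (m j)) : catc ε j i false = if i.1 = j then 1/2 + ε else 1/2 := by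
  simp [catc]

lemma catc_true (ε : ℝ) {d : ℕ} {m : Fin d → ℕ} (j : Fin d)
    (i : (j : Fin d) × Fin (m j)) : catc ε j i true = if i.1 = j then 1/2 - ε else 1/2 := by
  simp [catc]

lemma catc_sum (ε : ℝ) {d : ℕ} {m : Fin d → ℕ} (j : Fin d)
    (i : (j : Fin d) × Fin (m j)) : catc ε j i false + catc ε j i true = 1 := by
  rw [catc_false, catc_true]; split_ifs <;> ring

lemma catc_prod_sum (ε : ℝ) {d : ℕ} {m : Fin d → ℕ} (j : Fin d) :
    ∑ σ : ((j : Fin d) × Fin (m j)) → Bool, ∏ i, catc ε j i (σ i) = 1 := by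
  refine (sum_prod_bool (fun i v => catc ε j i v)).trans ?_
  exact Finset.prod_eq_one fun i _ => catc_sum ε j i

lemma catc_chi (ε : ℝ) {d : ℕ} {m : Fin d → ℕ} (j j' : Fin d) :
    ∑ σ : ((j : Fin d) × Fin (m j)) → Bool,
      ∏ i, (2 * (catc ε j i (σ i) * catc ε j' i (σ i))) =
    if j = j' then (1 + 4 * ε ^ 2) ^ (m j) else 1 := by
  refine (sum_prod_bool (fun i v => 2 * (catc ε j i v * catc ε j' i v))).trans ?_
  have hfac : ∀ i : (j : Fin d) × Fin (m j),
      2 * (catc ε j i false * catc ε j' i false) + 2 * (catc ε j i true * catc ε j' i true) =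
      if i.1 = j ∧ i.1 = j' then 1 + 4 * ε ^ 2 else 1 := by
    intro i
    rw [catc_false, catc_false, catc_true, catc_true]
    split_ifs <;> try ring
    all_goals tauto
  simp only [hfac]
  rw [show (Finset.univ : Finset ((j : Fin d) × Fin (m j))) =
      Finset.univ.sigma fun _ => Finset.univ by simp, Finset.prod_sigma]
  by_cases h : j = j'
  · subst h
    simp only [and_self]
    have : ∀ a : Fin d, ∏ _k : Fin (m a), (if a = j then 1 + 4*ε^2 else 1) =
        if a = j then (1 + 4*ε^2) ^ (m a) else 1 := by
      intro a; split <;> simp [Finset.prod_const]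
    simp only [this]
    rw [Finset.prod_ite_eq' Finset.univ j (fun a => (1 + 4*ε^2) ^ (m a))]
    simp
  · rw [if_neg h]
    refine Finset.prod_eq_one fun a _ => Finset.prod_eq_one fun k _ => ?_
    rw [if_neg]
    rintro ⟨rfl, rfl⟩; exact h rfl

lemma wgtQ_sum {d : ℕ} (m : Fin d → ℕ) :
    ∑ _σ : ((j : Fin d) × Fin (m j)) → Bool,
      ∏ _i : (j : Fin d) × Fin (m j), (1/2 : ℝ) = 1 := by
  refine (sum_prod_bool (fun (_ : (j : Fin d) × Fin (m j)) (_ : Bool) => (1/2 : ℝ))).trans ?_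
  exact Finset.prod_eq_one fun i _ => by norm_num

lemma wgtQ_pos {d : ℕ} (m : Fin d → ℕ) :
    (0:ℝ) < ∏ _i : (j : Fin d) × Fin (m j), (1/2 : ℝ) :=
  Finset.prod_pos fun i _ => by norm_num

lemma sumA_eq_one (ε : ℝ) {d : ℕ} (hd : 1 ≤ d) (m : Fin d → ℕ) :
    ∑ σ : ((j : Fin d) × Fin (m j)) → Bool,
      ((d:ℝ)⁻¹ * ∑ j, ∏ i, catc ε j i (σ i)) = 1 := by
  rw [← Finset.mul_sum, Finset.sum_comm]
  simp only [catc_prod_sum]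
  rw [Finset.sum_const, Finset.card_univ, Fintype.card_fin, nsmul_eq_mul, mul_one]
  rw [inv_mul_cancel₀]
  exact Nat.cast_ne_zero.mpr (by omega)

lemma chi_calc (ε : ℝ) {d : ℕ} (hd : 1 ≤ d) (m : Fin d → ℕ) :
    ∑ σ : ((j : Fin d) × Fin (m j)) → Bool,
      (((d:ℝ)⁻¹ * ∑ j, ∏ i, catc ε j i (σ i)) - ∏ _i : (j : Fin d) × Fin (m j), (1/2:ℝ)) ^ 2
        / ∏ _i : (j : Fin d) × Fin (m j), (1/2:ℝ) =
      ((1 / d : ℝ) * ∑ j, (1 + 4 * ε ^ 2) ^ (m j) - 1) / d := by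
  have hW := wgtQ_pos m
  set W : ℝ := ∏ _i : (j : Fin d) × Fin (m j), (1/2:ℝ) with hWdef
  have hdR : (0:ℝ) < d := by exact_mod_cast Nat.lt_of_lt_of_le Nat.zero_lt_one hd
  -- expand the square
  have hexp : ∀ σ : ((j : Fin d) × Fin (m j)) → Bool,
      (((d:ℝ)⁻¹ * ∑ j, ∏ i, catc ε j i (σ i)) - W) ^ 2 / W =
      ((d:ℝ)⁻¹ * ∑ j, ∏ i, catc ε j i (σ i)) ^ 2 / W
        - 2 * ((d:ℝ)⁻¹ * ∑ j, ∏ i, catc ε j i (σ i)) + W := by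
    intro σ
    field_simp
    ring
  simp only [hexp]
  rw [Finset.sum_add_distrib, Finset.sum_sub_distrib, ← Finset.mul_sum, sumA_eq_one ε hd m]
  rw [show (∑ _σ : ((j : Fin d) × Fin (m j)) → Bool, W) = 1 from wgtQ_sum m]
  -- now compute the chi-square sum
  have hA2 : ∀ σ : ((j : Fin d) × Fin (m j)) → Bool,
      ((d:ℝ)⁻¹ * ∑ j, ∏ i, catc ε j i (σ i)) ^ 2 / W =
      (d:ℝ)⁻¹ ^ 2 * ∑ j, ∑ j', ∏ i, (2 * (catc ε j i (σ i) * catc ε j' i (σ i))) := by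
    intro σ
    rw [mul_pow, pow_two (∑ j, ∏ i, catc ε j i (σ i)), Finset.sum_mul_sum, mul_div_assoc]
    congr 1
    rw [Finset.sum_div]
    refine Finset.sum_congr rfl fun j _ => ?_
    rw [Finset.sum_div]
    refine Finset.sum_congr rfl fun j' _ => ?_
    rw [← Finset.prod_mul_distrib, hWdef, ← Finset.prod_div_distrib]
    exact Finset.prod_congr rfl fun i _ => by ring
  simp only [hA2]
  rw [← Finset.mul_sum, Finset.sum_comm]
  have hswap : ∀ j : Fin d,
      ∑ σ : ((j : Fin d) × Fin (m j)) → Bool,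
        ∑ j', ∏ i, (2 * (catc ε j i (σ i) * catc ε j' i (σ i))) =
      (1 + 4 * ε ^ 2) ^ (m j) + ((d:ℝ) - 1) := by
    intro j
    rw [Finset.sum_comm]
    simp only [catc_chi]
    have h1 : ∀ j' : Fin d, (if j = j' then (1 + 4*ε^2) ^ (m j) else (1:ℝ)) =
        (if j = j' then (1 + 4*ε^2) ^ (m j) - 1 else 0) + 1 := fun j' => by split <;> ring
    simp only [h1]
    rw [Finset.sum_add_distrib, Finset.sum_ite_eq, Finset.sum_const, Finset.card_univ,
      Fintype.card_fin, nsmul_eq_mul, mul_one]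
    simp
    ring
  simp only [hswap]
  rw [Finset.sum_add_distrib, Finset.sum_const, Finset.card_univ, Fintype.card_fin,
    nsmul_eq_mul]
  field_simp
  ring

lemma main_bound (ε : ℝ) (hε : |ε| < 1/2) {d : ℕ} (hd : 1 ≤ d) (m : Fin d → ℕ)
    (φ : (((j : Fin d) × Fin (m j)) → Bool) → Prop) [DecidablePred φ] :
    |∑ σ, if φ σ then ((d:ℝ)⁻¹ * ∑ j, ∏ i, catc ε j i (σ i)) -
        ∏ _i : (j : Fin d) × Fin (m j), (1/2:ℝ) else 0| ≤
      (1 / (2 * Real.sqrt d)) * Real.sqrt ((1 / d : ℝ) * ∑ j, (1 + 4 * ε ^ 2) ^ (m j) - 1) := by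
  have hW := wgtQ_pos m
  have hdR : (0:ℝ) < d := by exact_mod_cast Nat.lt_of_lt_of_le Nat.zero_lt_one hd
  set W : ℝ := ∏ _i : (j : Fin d) × Fin (m j), (1/2:ℝ) with hWdef
  set Δ : (((j : Fin d) × Fin (m j)) → Bool) → ℝ :=
    fun σ => ((d:ℝ)⁻¹ * ∑ j, ∏ i, catc ε j i (σ i)) - W with hΔdef
  set T : ℝ := (1 / d : ℝ) * ∑ j, (1 + 4 * ε ^ 2) ^ (m j) - 1 with hTdef
  have h0 : ∑ σ, Δ σ = 0 := by
    rw [hΔdef]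
    rw [Finset.sum_sub_distrib, sumA_eq_one ε hd m, wgtQ_sum m, sub_self]
  have habs := abs_sum_ite_le Δ h0 φ
  have hCS : (∑ σ, |Δ σ|) ^ 2 ≤ T / d := by
    have h1 := l1_sq_le_chi (fun _ => W) Δ (fun _ => hW) (wgtQ_sum m)
    have h2 := chi_calc ε hd m
    rw [hΔdef, hTdef]
    exact le_of_le_of_eq h1 h2
  have hT0 : 0 ≤ T := by
    have hds : (d:ℝ) ≤ ∑ j, (1 + 4 * ε ^ 2) ^ (m j) := by
      calc (d:ℝ) = ∑ _j : Fin d, (1:ℝ) := by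
            rw [Finset.sum_const, Finset.card_univ, Fintype.card_fin, nsmul_eq_mul, mul_one]
        _ ≤ _ := Finset.sum_le_sum fun j _ => one_le_pow₀ (by nlinarith [sq_nonneg ε])
    rw [hTdef, sub_nonneg, one_div, inv_mul_eq_div]
    exact (one_le_div hdR).mpr hds
  have hL1 : ∑ σ, |Δ σ| ≤ Real.sqrt (T / d) := by
    rw [Real.le_sqrt (Finset.sum_nonneg fun σ _ => abs_nonneg _) (by positivity)]
    exact hCS
  have hsq : Real.sqrt (T / d) = Real.sqrt T / Real.sqrt d := Real.sqrt_div hT0 d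
  have hsd : (0:ℝ) < Real.sqrt d := Real.sqrt_pos.mpr hdR
  calc |∑ σ, if φ σ then Δ σ else 0| ≤ (∑ σ, |Δ σ|) / 2 := habs
    _ ≤ Real.sqrt (T / d) / 2 := by linarith
    _ = (1 / (2 * Real.sqrt d)) * Real.sqrt T := by
        rw [hsq, div_div, mul_comm (Real.sqrt (d:ℝ)) 2, one_div, inv_mul_eq_div]

/-- Categorical (±1-valued) version of the minimax lower bound: with `p` uniform on `{-1,1}`
and `q(-1) = 1/2 + ε`, `q(1) = 1/2 - ε`, let `Q` be the product measure on `{-1,1}^N`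
(coordinates indexed by `(j,k)`, `j < d`, `k < m j`) with all coordinates `p`, and `P`
the uniform mixture over `j` of products where group `j` follows `q`. Then
`TV(P, Q) ≤ (1/(2√d)) · ((1/d) ∑_j (1+4ε²)^{m_j} - 1)^{1/2}`, and any hypothesis test has
total error probability at least `1` minus that bound. -/
theorem tv_bound_mixture_categorical (ε : ℝ) (hε : |ε| < 1 / 2)
    (p q : ℝ → ℝ)
    (hpm : p (-1) = 1 / 2) (hpp : p 1 = 1 / 2)
    (hqm : q (-1) = 1 / 2 + ε) (hqp : q 1 = 1 / 2 - ε)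
    (d : ℕ) (hd : 1 ≤ d) (m : Fin d → ℕ)
    (μp μq : Measure ℝ)
    (hμp : μp = ENNReal.ofReal (p (-1)) • Measure.dirac (-1 : ℝ) +
      ENNReal.ofReal (p 1) • Measure.dirac (1 : ℝ))
    (hμq : μq = ENNReal.ofReal (q (-1)) • Measure.dirac (-1 : ℝ) +
      ENNReal.ofReal (q 1) • Measure.dirac (1 : ℝ))
    (P Q : Measure (((j : Fin d) × Fin (m j)) → ℝ))
    (hQ : Q = Measure.pi fun _ => μp)
    (hP : P = (d : ENNReal)⁻¹ •
      ∑ j : Fin d, Measure.pi fun i : (j : Fin d) × Fin (m j) =>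
        if i.1 = j then μq else μp) :
    tvDist P Q ≤
        (1 / (2 * Real.sqrt d)) *
          Real.sqrt ((1 / d : ℝ) * ∑ j, (1 + 4 * ε ^ 2) ^ (m j) - 1) ∧
      ∀ Ψ : (((j : Fin d) × Fin (m j)) → ℝ) → Bool, Measurable Ψ →
        (P {b | Ψ b = true}).toReal + (Q {b | Ψ b = false}).toReal ≥
          1 - (1 / (2 * Real.sqrt d)) *
            Real.sqrt ((1 / d : ℝ) * ∑ j, (1 + 4 * ε ^ 2) ^ (m j) - 1) := by
  have hQrep : Q = ∑ σ : ((j : Fin d) × Fin (m j)) → Bool,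
      ENNReal.ofReal (∏ _i : (j : Fin d) × Fin (m j), (1/2:ℝ)) •
        Measure.dirac (fun i => if σ i then (1:ℝ) else -1) := by
    rw [hQ, hμp, hpm, hpp]
    exact pi_two_point (fun _ _ => (1/2:ℝ)) (fun _ _ => by norm_num)
  have hPjfam : ∀ j : Fin d, (fun i : (j : Fin d) × Fin (m j) => if i.1 = j then μq else μp) =
      fun i => ENNReal.ofReal (catc ε j i false) • Measure.dirac (-1:ℝ) +
        ENNReal.ofReal (catc ε j i true) • Measure.dirac (1:ℝ) := by
    intro j; funext i
    rw [catc_false, catc_true]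
    by_cases h : i.1 = j
    · rw [if_pos h, if_pos h, if_pos h, hμq, hqm, hqp]
    · rw [if_neg h, if_neg h, if_neg h, hμp, hpm, hpp]
  have hPrep : ∀ j : Fin d, Measure.pi (fun i : (j : Fin d) × Fin (m j) =>
      if i.1 = j then μq else μp) =
      ∑ σ : ((j : Fin d) × Fin (m j)) → Bool,
        ENNReal.ofReal (∏ i, catc ε j i (σ i)) •
          Measure.dirac (fun i => if σ i then (1:ℝ) else -1) := fun j => by
    rw [hPjfam j]
    exact pi_two_point (catc ε j) (catc_nonneg hε j)
  have hQs : ∀ s : Set (((j : Fin d) × Fin (m j)) → ℝ), MeasurableSet s →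
      (Q s).toReal = ∑ σ : ((j : Fin d) × Fin (m j)) → Bool,
        if (fun i => if σ i then (1:ℝ) else -1) ∈ s
          then (∏ _i : (j : Fin d) × Fin (m j), (1/2:ℝ)) else 0 := by
    intro s hs
    have h : Q s = ENNReal.ofReal (∑ σ : ((j : Fin d) × Fin (m j)) → Bool,
        if (fun i => if σ i then (1:ℝ) else -1) ∈ s
          then (∏ _i : (j : Fin d) × Fin (m j), (1/2:ℝ)) else 0) := by
      rw [hQrep]
      exact sum_dirac_apply _ (fun _ => (wgtQ_pos m).le) _ hs
    rw [h, ENNReal.toReal_ofReal]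
    exact Finset.sum_nonneg fun σ _ => by split <;> first | exact (wgtQ_pos m).le | exact le_rfl
  have hPs : ∀ s : Set (((j : Fin d) × Fin (m j)) → ℝ), MeasurableSet s →
      (P s).toReal = ∑ σ : ((j : Fin d) × Fin (m j)) → Bool,
        if (fun i => if σ i then (1:ℝ) else -1) ∈ s
          then ((d:ℝ)⁻¹ * ∑ j, ∏ i, catc ε j i (σ i)) else 0 := by
    intro s hs
    have h1 : ∀ j : Fin d, (Measure.pi (fun i : (j : Fin d) × Fin (m j) =>
        if i.1 = j then μq else μp)) s =
        ENNReal.ofReal (∑ σ : ((j : Fin d) × Fin (m j)) → Bool,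
          if (fun i => if σ i then (1:ℝ) else -1) ∈ s
            then (∏ i, catc ε j i (σ i)) else 0) := fun j => by
      rw [hPrep j]
      exact sum_dirac_apply _
        (fun σ => Finset.prod_nonneg fun i _ => catc_nonneg hε j i _) _ hs
    have hnn : ∀ j : Fin d, 0 ≤ ∑ σ : ((j : Fin d) × Fin (m j)) → Bool,
        if (fun i => if σ i then (1:ℝ) else -1) ∈ s
          then (∏ i, catc ε j i (σ i)) else 0 := fun j =>
      Finset.sum_nonneg fun σ _ => by
        split
        · exact Finset.prod_nonneg fun i _ => catc_nonneg hε j i _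
        · exact le_rfl
    rw [hP, Measure.smul_apply, smul_eq_mul, ENNReal.toReal_mul, Measure.finset_sum_apply]
    simp only [h1]
    rw [ENNReal.toReal_sum (fun j _ => ENNReal.ofReal_ne_top)]
    simp only [ENNReal.toReal_ofReal (hnn _)]
    rw [ENNReal.toReal_inv, ENNReal.toReal_natCast, Finset.sum_comm, Finset.mul_sum]
    refine Finset.sum_congr rfl fun σ _ => ?_
    by_cases hmem : (fun i => if σ i then (1:ℝ) else -1) ∈ s
    · simp only [if_pos hmem, Finset.mul_sum]
    · simp [hmem]
  have key : ∀ s : Set (((j : Fin d) × Fin (m j)) → ℝ), MeasurableSet s →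
      |(P s).toReal - (Q s).toReal| ≤
        (1 / (2 * Real.sqrt d)) *
          Real.sqrt ((1 / d : ℝ) * ∑ j, (1 + 4 * ε ^ 2) ^ (m j) - 1) := by
    intro s hs
    rw [hPs s hs, hQs s hs, ← Finset.sum_sub_distrib]
    have h : ∀ σ : ((j : Fin d) × Fin (m j)) → Bool,
        (if (fun i => if σ i then (1:ℝ) else -1) ∈ s
            then ((d:ℝ)⁻¹ * ∑ j, ∏ i, catc ε j i (σ i)) else 0) -
          (if (fun i => if σ i then (1:ℝ) else -1) ∈ s
            then (∏ _i : (j : Fin d) × Fin (m j), (1/2:ℝ)) else 0) =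
        if (fun i => if σ i then (1:ℝ) else -1) ∈ s
          then ((d:ℝ)⁻¹ * ∑ j, ∏ i, catc ε j i (σ i)) -
            (∏ _i : (j : Fin d) × Fin (m j), (1/2:ℝ)) else 0 := fun σ => by
      split <;> ring
    simp only [h]
    exact main_bound ε hε hd m (fun σ => (fun i => if σ i then (1:ℝ) else -1) ∈ s)
  constructor
  · haveI : Nonempty {s : Set (((j : Fin d) × Fin (m j)) → ℝ) // MeasurableSet s} :=
      ⟨⟨∅, MeasurableSet.empty⟩⟩
    exact ciSup_le fun s => key s.1 s.2
  · intro Ψ hΨ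
    have hs : MeasurableSet {b : ((j : Fin d) × Fin (m j)) → ℝ | Ψ b = true} :=
      hΨ (measurableSet_singleton true)
    have hsF : {b : ((j : Fin d) × Fin (m j)) → ℝ | Ψ b = false} =
        {b : ((j : Fin d) × Fin (m j)) → ℝ | Ψ b = true}ᶜ := by
      ext b; simp
    have hQtot : (Q {b | Ψ b = true}).toReal + (Q {b | Ψ b = true}ᶜ).toReal = 1 := by
      rw [hQs _ hs, hQs _ hs.compl, ← Finset.sum_add_distrib, ← wgtQ_sum m]
      refine Finset.sum_congr rfl fun σ _ => ?_
      by_cases hm : (fun i => if σ i then (1:ℝ) else -1) ∈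
          {b : ((j : Fin d) × Fin (m j)) → ℝ | Ψ b = true}
      · simp [hm]
      · simp [hm]
    have hkey := key _ hs
    rw [hsF]
    have := abs_le.mp hkey
    linarith [this.1, this.2, hQtot]
end

section
/- Let b > 0 and ε ∈ ℝ, and let g_μ(x) = (1/(2b))·exp(−|x−μ|/b) denote the Laplace density with location μ and scale b. Then exp(−|ε|/b) ≤ ∫_ℝ g_ε(x)²/g_0(x) dx ≤ exp(|ε|/b). -/
/-!
The integrand `g_ε² / g_0` is the likelihood ratio `g_ε / g_0 = exp ((|x| - |x - ε|) / b)` times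
the probability density `g_ε`. By the reverse triangle inequality the ratio lies between
`exp (-|ε| / b)` and `exp (|ε| / b)`, and integrating these bounds against `g_ε` gives the claim.
-/

open MeasureTheory Real Set

lemma integral_mul_density_mem_Icc {α : Type*} [MeasurableSpace α] {μ : Measure α}
    {f r : α → ℝ} {c C : ℝ} (hf_nonneg : ∀ x, 0 ≤ f x) (hf : Integrable f μ)
    (hf_one : ∫ x, f x ∂μ = 1) (hr : AEStronglyMeasurable r μ) (hc : ∀ x, c ≤ r x)
    (hC : ∀ x, r x ≤ C) :
    ∫ x, r x * f x ∂μ ∈ Icc c C := by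
  have hcf (x : α) : c * f x ≤ r x * f x := mul_le_mul_of_nonneg_right (hc x) (hf_nonneg x)
  have hCf (x : α) : r x * f x ≤ C * f x := mul_le_mul_of_nonneg_right (hC x) (hf_nonneg x)
  have hrf : Integrable (fun x ↦ r x * f x) μ :=
    integrable_of_le_of_le (hr.mul hf.aestronglyMeasurable) (.of_forall hcf) (.of_forall hCf)
      (hf.const_mul c) (hf.const_mul C)
  constructor
  · calc c = ∫ x, c * f x ∂μ := by rw [integral_const_mul, hf_one, mul_one]
      _ ≤ ∫ x, r x * f x ∂μ := integral_mono (hf.const_mul c) hrf hcf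
  · calc ∫ x, r x * f x ∂μ ≤ ∫ x, C * f x ∂μ := integral_mono hrf (hf.const_mul C) hCf
      _ = C := by rw [integral_const_mul, hf_one, mul_one]

lemma integral_exp_neg_abs_div {b : ℝ} (hb : 0 < b) : ∫ x : ℝ, exp (-|x| / b) = 2 * b := by
  rw [integral_comp_abs (f := fun y ↦ exp (-y / b))]
  have h := integral_exp_mul_Ioi (a := -b⁻¹) (by simpa using hb) 0
  simp only [mul_zero, exp_zero, neg_mul] at h
  simp_rw [neg_div, div_eq_inv_mul, h]
  field_simp

-- `integral_comp_abs` holds without integrability, so the nonzero value of the integral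
-- already forces integrability.
lemma integrable_exp_neg_abs_div {b : ℝ} (hb : 0 < b) :
    Integrable (fun x : ℝ ↦ exp (-|x| / b)) :=
  .of_integral_ne_zero (by rw [integral_exp_neg_abs_div hb]; positivity)

noncomputable def laplacePDFReal (μ b x : ℝ) : ℝ := (2 * b)⁻¹ * exp (-|x - μ| / b)

section laplacePDFReal

variable {μ ν b : ℝ}

lemma laplacePDFReal_pos (hb : 0 < b) (x : ℝ) : 0 < laplacePDFReal μ b x := by
  unfold laplacePDFReal; positivity

lemma continuous_laplacePDFReal (μ b : ℝ) : Continuous (laplacePDFReal μ b) := by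
  unfold laplacePDFReal; fun_prop

lemma integrable_laplacePDFReal (hb : 0 < b) : Integrable (laplacePDFReal μ b) :=
  ((integrable_exp_neg_abs_div hb).comp_sub_right μ).const_mul (2 * b)⁻¹

lemma integral_laplacePDFReal (hb : 0 < b) : ∫ x, laplacePDFReal μ b x = 1 := by
  unfold laplacePDFReal
  rw [integral_const_mul, integral_sub_right_eq_self (fun x ↦ exp (-|x| / b)),
    integral_exp_neg_abs_div hb, inv_mul_cancel₀ (by positivity)]

lemma laplacePDFReal_div_laplacePDFReal (hb : b ≠ 0) (x : ℝ) :
    laplacePDFReal μ b x / laplacePDFReal ν b x = exp ((|x - ν| - |x - μ|) / b) := by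
  unfold laplacePDFReal
  rw [mul_div_mul_left _ _ (by positivity), ← exp_sub]
  ring_nf

lemma laplacePDFReal_div_mem_Icc (hb : 0 < b) (x : ℝ) :
    laplacePDFReal μ b x / laplacePDFReal ν b x ∈
      Icc (exp (-|μ - ν| / b)) (exp (|μ - ν| / b)) := by
  have h : |(|x - ν| - |x - μ|)| ≤ |μ - ν| := by
    simpa using abs_abs_sub_abs_le_abs_sub (x - ν) (x - μ)
  rw [laplacePDFReal_div_laplacePDFReal hb.ne']
  constructor <;> gcongr <;> linarith [abs_le.mp h]

end laplacePDFReal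

/-- Chi-square affinity between two Laplace densities with the same scale `b` and
locations `ε` and `0` is bounded between `exp(-|ε|/b)` and `exp(|ε|/b)`. -/
theorem laplace_chi_sq_affinity_bounds (b ε : ℝ) (hb : 0 < b)
    (g : ℝ → ℝ → ℝ)
    (hg : ∀ μ x, g μ x = (1 / (2 * b)) * Real.exp (-|x - μ| / b)) :
    Real.exp (-|ε| / b) ≤ ∫ x, (g ε x) ^ 2 / g 0 x ∧
      ∫ x, (g ε x) ^ 2 / g 0 x ≤ Real.exp (|ε| / b) := by
  obtain rfl : g = fun μ ↦ laplacePDFReal μ b := by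
    ext μ x; rw [hg, laplacePDFReal, one_div]
  have hsq (x : ℝ) : laplacePDFReal ε b x ^ 2 / laplacePDFReal 0 b x =
      laplacePDFReal ε b x / laplacePDFReal 0 b x * laplacePDFReal ε b x := by
    rw [sq, mul_div_right_comm]
  simp_rw [hsq]
  have hratio : AEStronglyMeasurable (fun x ↦ laplacePDFReal ε b x / laplacePDFReal 0 b x) :=
    ((continuous_laplacePDFReal ε b).div (continuous_laplacePDFReal 0 b)
      fun x ↦ (laplacePDFReal_pos hb x).ne').aestronglyMeasurable
  simpa using integral_mul_density_mem_Icc (fun x ↦ (laplacePDFReal_pos hb x).le)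
    (integrable_laplacePDFReal hb) (integral_laplacePDFReal hb) hratio
    (fun x ↦ (laplacePDFReal_div_mem_Icc hb x).1) (fun x ↦ (laplacePDFReal_div_mem_Icc hb x).2)
end

section
/- Let M₀, M_p > 0 and r₀, r_p ∈ (0, 1) be real numbers satisfying M₀·(1 − r₀) = M_p·(1 − r_p) and M₀·r₀ = M_p·r_p. Then r₀ = r_p and M₀ = M_p. Moreover, if additionally V_X ≥ 0, V_S, V_ε > 0, and two positive reals MSE₀, MSE_p satisfy MSE₀ = V_S + V_ε, MSE_p = V_ε, M₀ = MSE₀·V_X/(V_S + V_ε), and M_p = MSE_p·(V_X + V_S)/V_ε, then the equality M₀ = M_p forces V_S = 0, a contradiction; hence in the additive linear model of Theorem 4.2, vanishing benefit of personalization in explanation quality (both sufficiency and comprehensiveness) implies vanishing benefit of personalization in prediction accuracy. -/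
/-- If `M₀, M_p > 0` and `r₀, r_p ∈ (0,1)` satisfy `M₀(1-r₀) = M_p(1-r_p)` (zero benefit
of personalization in sufficiency) and `M₀r₀ = M_p r_p` (zero benefit in
comprehensiveness), then `r₀ = r_p` and `M₀ = M_p`. Moreover, in the additive linear
model where `M₀ = MSE₀·V_X/(V_S + V_ε)` and `M_p = MSE_p·(V_X + V_S)/V_ε` with
`MSE₀ = V_S + V_ε`, `MSE_p = V_ε`, `V_X ≥ 0` and `V_S, V_ε > 0`, these equalities are
contradictory (they would force `V_S = 0`); hence vanishing benefit of personalization in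
explanation quality implies vanishing benefit in prediction accuracy. -/
theorem bopx_zero_implies_bop_zero (M₀ Mp r₀ rp : ℝ)
    (hM₀ : 0 < M₀) (hMp : 0 < Mp)
    (hr₀ : r₀ ∈ Set.Ioo (0 : ℝ) 1) (hrp : rp ∈ Set.Ioo (0 : ℝ) 1)
    (hsuff : M₀ * (1 - r₀) = Mp * (1 - rp))
    (hcomp : M₀ * r₀ = Mp * rp) :
    (r₀ = rp ∧ M₀ = Mp) ∧
      ∀ VX VS Vε MSE₀ MSEp : ℝ, 0 ≤ VX → 0 < VS → 0 < Vε →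
        0 < MSE₀ → 0 < MSEp →
        MSE₀ = VS + Vε → MSEp = Vε →
        M₀ = MSE₀ * VX / (VS + Vε) → Mp = MSEp * (VX + VS) / Vε → False := by
  have hM : M₀ = Mp := by nlinarith [hsuff, hcomp]
  have hr : r₀ = rp := by
    have : M₀ * r₀ = M₀ * rp := by rw [hcomp, hM]
    exact mul_left_cancel₀ (ne_of_gt hM₀) this
  refine ⟨⟨hr, hM⟩, ?_⟩
  intro VX VS Vε MSE₀ MSEp hVX hVS hVε h1 h2 e1 e2 e3 e4
  have hM0 : M₀ = VX := by
    rw [e3, e1]; field_simp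
  have hMp' : Mp = VX + VS := by
    rw [e4, e2]; field_simp
  nlinarith [hM0, hMp']
end
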